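/- Let T=∪_{i=1}^k C(X_i) be a complex cone of dimension m∈{1,…,n} that satisfies the non-flat condition, and define its relative interior RI_m(T)={x∈T : T∩B(x,r)=P∩B(x,r) for some r>0 and some m-dimensional affine plane P}. Then RI_m(T)=∪_i C(X_i)°, where C(X_i)° denotes the relative interior of the convex set C(X_i). Moreover, T\RI_m(T)=∪_{Y∈Ω_T, #Y=m−1} C(Y), and this set is a complex cone of dimension m−1 that satisfies the non-flat condition. -/

import Mathlib

open Metric Set
open scoped Classical

noncomputable section

namespace DDTGen

variable {V : Type*} [NormedAddCommGroup V] [InnerProductSpace ℝ V]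

/-- The cone over a finite set `X ⊆ V`: all nonnegative linear combinations of
elements of `X`.  For `X = ∅` this is `{0}`. -/
def coneOf (X : Finset V) : Set V :=
  {y | ∃ c : V → ℝ, (∀ v ∈ X, 0 ≤ c v) ∧ y = ∑ v ∈ X, c v • v}

/-- `X` is the base of a simple cone of dimension `m`: `X` consists of `m` unit
vectors and `{0} ∪ X` is affinely independent. -/
def IsSimpleBase (m : ℕ) (X : Finset V) : Prop :=
  X.card = m ∧ (∀ v ∈ X, ‖v‖ = 1) ∧
    AffineIndependent ℝ (Subtype.val : (insert (0 : V) (X : Set V) : Set V) → V)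

/-- A complex cone of dimension `m`: a finite union of distinct simple cones of
dimension `m` such that any two faces intersect in the common sub-face. -/
structure ComplexCone (V : Type*) [NormedAddCommGroup V] [InnerProductSpace ℝ V]
    (m : ℕ) where
  faces : Finset (Finset V)
  faces_nonempty : faces.Nonempty
  simple : ∀ X ∈ faces, IsSimpleBase m X
  inter_eq : ∀ X Y : Finset V, (∃ X' ∈ faces, X ⊆ X') → (∃ Y' ∈ faces, Y ⊆ Y') →
    coneOf X ∩ coneOf Y = coneOf (X ∩ Y)

namespace ComplexCone

variable {m : ℕ}

/-- membership in `Ω_T`. -/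
def inOmega (T : ComplexCone V m) (Y : Finset V) : Prop :=
  ∃ X ∈ T.faces, Y ⊆ X

/-- the underlying set of the complex cone. -/
def carrier (T : ComplexCone V m) : Set V :=
  ⋃ X ∈ T.faces, coneOf X

end ComplexCone

/-- The set of angles `∠(F₁,F₂)` of the paper: angles `∠ f₁ z f₂` with
`z ∈ C(F₁ ∩ F₂)`, `f_j ∈ C(F_j) \ C(F₁ ∩ F₂)` realizing the distance to
`C(F₁ ∩ F₂)` at `z`. -/
def angleSet (F₁ F₂ : Finset V) : Set ℝ :=
  {θ | ∃ z ∈ coneOf (F₁ ∩ F₂),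
      ∃ f₁ ∈ coneOf F₁ \ coneOf (F₁ ∩ F₂),
      ∃ f₂ ∈ coneOf F₂ \ coneOf (F₁ ∩ F₂),
      Metric.infDist f₁ (coneOf (F₁ ∩ F₂)) = dist f₁ z ∧
      Metric.infDist f₂ (coneOf (F₁ ∩ F₂)) = dist f₂ z ∧
      θ = EuclideanGeometry.angle f₁ z f₂}

/-- the non-flat condition for a complex cone. -/
def ComplexCone.NonFlat {m : ℕ} (T : ComplexCone V m) : Prop :=
  ∀ Y Z₁ Z₂ : Finset V, T.inOmega Y → T.inOmega Z₁ → T.inOmega Z₂ →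
    Y.card < m → Y = Z₁ ∩ Z₂ → Z₁.card = Y.card + 1 → Z₂.card = Y.card + 1 →
    sSup (angleSet Z₁ Z₂) < Real.pi

/-- the minimal angle `∠(T)` of a complex cone. -/
def ComplexCone.minAngle {m : ℕ} (T : ComplexCone V m) : ℝ :=
  sInf {θ | ∃ F₁ F₂ : Finset V, T.inOmega F₁ ∧ T.inOmega F₂ ∧
    F₁.Nonempty ∧ F₂.Nonempty ∧ ¬F₁ ⊆ F₂ ∧ ¬F₂ ⊆ F₁ ∧ θ = sInf (angleSet F₁ F₂)}

/-- relative interior of a (convex) set, following the paper's definition. -/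
def relInterior (F : Set V) : Set V :=
  {x | x ∈ F ∧ ∃ r > 0, (affineSpan ℝ F : Set V) ∩ Metric.ball x r ⊆ F}

/-- `RI m T`: points of `T` near which `T` coincides with an `m`-dimensional
affine plane. -/
def RI (m : ℕ) (T : Set V) : Set V :=
  {x | x ∈ T ∧ ∃ r > 0, ∃ Q : AffineSubspace ℝ V, (Q : Set V).Nonempty ∧
      Module.finrank ℝ Q.direction = m ∧
      T ∩ Metric.ball x r = (Q : Set V) ∩ Metric.ball x r}

/-- `π` is the orthogonal (nearest point) projection onto the affine subspace `P`. -/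
def IsOrthProjOnto (P : AffineSubspace ℝ V) (π : V →ᵃ[ℝ] V) : Prop :=
  (∀ y, π y ∈ P) ∧ (∀ p ∈ P, π p = p) ∧
    ∀ y : V, ∀ p ∈ P, inner ℝ (y - π y) (p - π y) = (0 : ℝ)

/-- normalized local Hausdorff distance `d_{x,r}(F₁,F₂)`. -/
def dxr {X : Type*} [PseudoMetricSpace X] (x : X) (r : ℝ) (F₁ F₂ : Set X) : ℝ :=
  (1 / r) * max (⨆ z ∈ F₂ ∩ Metric.ball x r, Metric.infDist z F₁)
                (⨆ z ∈ F₁ ∩ Metric.ball x r, Metric.infDist z F₂)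

/-- the blow-up cone `C(W ∩ B(x,r) − x)`. -/
def blowUp (W : Set V) (x : V) (r : ℝ) : Set V :=
  {y | ∃ c : ℝ, 0 ≤ c ∧ ∃ z ∈ W ∩ Metric.ball x r, y = c • (z - x)}

/-- projection of `ℝ^N` onto the first `N'` coordinates. -/
def proj1 (N' N : ℕ) (y : EuclideanSpace ℝ (Fin N)) : EuclideanSpace ℝ (Fin N') :=
  WithLp.toLp 2 (fun j : Fin N' => if h : (j : ℕ) < N then y ⟨(j : ℕ), h⟩ else 0)

/-- the set `T × ℝ^m × {0}` inside `ℝ^N`, where `T ⊆ ℝ^{N'}` occupies the first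
`N'` coordinates, the `ℝ^m` factor the next `m` coordinates, and the remaining
coordinates vanish. -/
def prodSet (N' N : ℕ) (T : Set (EuclideanSpace ℝ (Fin N'))) (m : ℕ) :
    Set (EuclideanSpace ℝ (Fin N)) :=
  {y | proj1 N' N y ∈ T ∧ ∀ i : Fin N, N' + m ≤ (i : ℕ) → y i = 0}

/-- data describing a set of type `m` in `ℝ^N`:
`W = R (T × ℝ^m × {0})` with `T` a non-flat complex cone of dimension `n−m`
and `R` an isometry of `ℝ^N`. -/
structure TypedCone (n N' N : ℕ) where
  m : ℕ
  m_le : m ≤ n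
  T : ComplexCone (EuclideanSpace ℝ (Fin N')) (n - m)
  nonflat : T.NonFlat
  R : EuclideanSpace ℝ (Fin N) ≃ᵢ EuclideanSpace ℝ (Fin N)

namespace TypedCone

variable {n N' N : ℕ}

/-- the underlying set `R (T × ℝ^m × {0})`. -/
def carrier (C : TypedCone n N' N) : Set (EuclideanSpace ℝ (Fin N)) :=
  C.R '' prodSet N' N C.T.carrier C.m

/-- the `d`-dimensional spine `L^d(W)`. -/
def spine (C : TypedCone n N' N) (d : ℕ) : Set (EuclideanSpace ℝ (Fin N)) :=
  if d < C.m then ∅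
  else C.R '' prodSet N' N
    (⋃ Y ∈ {Y : Finset (EuclideanSpace ℝ (Fin N')) |
        C.T.inOmega Y ∧ Y.card = d - C.m}, coneOf Y) C.m

/-- `L` is a branch of the `d`-dimensional spine of `C`. -/
def IsBranch (C : TypedCone n N' N) (d : ℕ) (L : Set (EuclideanSpace ℝ (Fin N))) : Prop :=
  C.m ≤ d ∧ ∃ Y : Finset (EuclideanSpace ℝ (Fin N')),
    C.T.inOmega Y ∧ Y.card = d - C.m ∧ L = C.R '' prodSet N' N (coneOf Y) C.m

end TypedCone

/-- `W` is a set of type `m` in `ℝ^N`. -/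
def IsTypeM (n N' N m : ℕ) (W : Set (EuclideanSpace ℝ (Fin N))) : Prop :=
  m ≤ n ∧ ∃ C : TypedCone n N' N, C.m = m ∧ C.carrier = W

/-- `𝒯𝒜`: all sets of type `m`, `0 ≤ m ≤ n`. -/
def TA (n N' N : ℕ) : Set (Set (EuclideanSpace ℝ (Fin N))) :=
  {W | ∃ m, IsTypeM n N' N m W}

/-- `𝒜(W)`: all isometric images of (stabilized) blow-up cones of `W`. -/
def calA {N : ℕ} (W : Set (EuclideanSpace ℝ (Fin N))) :
    Set (Set (EuclideanSpace ℝ (Fin N))) :=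
  {Z | ∃ R : EuclideanSpace ℝ (Fin N) ≃ᵢ EuclideanSpace ℝ (Fin N),
      ∃ x ∈ W, ∃ r : ℝ, 0 < r ∧
        (∀ r' : ℝ, 0 < r' → r' ≤ r → blowUp W x r' = blowUp W x r) ∧
        Z = R '' blowUp W x r}

/-- `𝒜(ℬ) = ∪_{W ∈ ℬ} 𝒜(W)`. -/
def calAB {N : ℕ} (ℬ : Set (Set (EuclideanSpace ℝ (Fin N)))) :
    Set (Set (EuclideanSpace ℝ (Fin N))) :=
  ⋃ W ∈ ℬ, calA W

/-- `W₁ ∼ W₂` iff they differ by an isometry of `ℝ^N`. -/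
def EquivIso {N : ℕ} (W₁ W₂ : Set (EuclideanSpace ℝ (Fin N))) : Prop :=
  ∃ R : EuclideanSpace ℝ (Fin N) ≃ᵢ EuclideanSpace ℝ (Fin N), W₁ = R '' W₂

/-- `ℬ/∼` is finite: `ℬ` is covered by finitely many isometry classes. -/
def FiniteModIso {N : ℕ} (ℬ : Set (Set (EuclideanSpace ℝ (Fin N)))) : Prop :=
  ∃ S : Set (Set (EuclideanSpace ℝ (Fin N))), S.Finite ∧ ∀ W ∈ ℬ, ∃ W₀ ∈ S, EquivIso W W₀

/-- the minimal angle constant `α(ℬ)`. -/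
def alphaB (n N' N : ℕ) (ℬ : Set (Set (EuclideanSpace ℝ (Fin N)))) : ℝ :=
  sInf {a | ∃ C : TypedCone n N' N, C.carrier ∈ calAB ℬ ∧ a = C.T.minAngle}

/-- `δ₀` is a cone-separation constant for `ℬ` (Proposition 2.10). -/
def SepConst (n N' N : ℕ) (ℬ : Set (Set (EuclideanSpace ℝ (Fin N)))) (δ₀ : ℝ) : Prop :=
  0 < δ₀ ∧ ∀ t : ℕ, t ≤ n - 1 →
    ∀ C : TypedCone n N' N, C.carrier ∈ calAB ℬ → C.m ≤ t →
    ∀ x ∈ C.spine t, ∀ W ∈ calAB ℬ,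
      (∃ k, t + 1 ≤ k ∧ k ≤ n ∧ IsTypeM n N' N k W) →
      ∀ r : ℝ, 0 < r → dxr x r C.carrier W > δ₀

/-- `n₀` is a cone-replacement constant for `ℬ` (Proposition 2.11). -/
def RepConst (n N' N : ℕ) (ℬ : Set (Set (EuclideanSpace ℝ (Fin N)))) (n₀ : ℝ) : Prop :=
  10 < n₀ ∧ ∀ t : ℕ, t ≤ n - 1 →
    ∀ C : TypedCone n N' N, C.carrier ∈ calAB ℬ → C.m ≤ t →
    ∀ (x : EuclideanSpace ℝ (Fin N)) (r : ℝ), 0 < r →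
      (C.carrier ∩ Metric.ball x r).Nonempty →
      Metric.ball x (n₀ * r) ∩ C.spine t = ∅ →
      ∃ Y ∈ calAB ℬ, (∃ u, t + 1 ≤ u ∧ u ≤ n ∧ IsTypeM n N' N u Y) ∧
        C.carrier ∩ Metric.ball x r = Y ∩ Metric.ball x r

/-- `a_m(x,r)`: the infimum of `d_{x,r}(E,W)` over sets `W ∈ 𝒜(ℬ)` of type `m`
whose `m`-spine passes through `x`. -/
def aM (n N' N : ℕ) (ℬ : Set (Set (EuclideanSpace ℝ (Fin N))))
    (E : Set (EuclideanSpace ℝ (Fin N))) (m : ℕ)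
    (x : EuclideanSpace ℝ (Fin N)) (r : ℝ) : ℝ :=
  sInf {d | ∃ C : TypedCone n N' N, C.m = m ∧ C.carrier ∈ calAB ℬ ∧ x ∈ C.spine m ∧
      d = dxr x r E C.carrier}

/-- the stratum `E_m`. -/
def Estrat (n N' N : ℕ) (ℬ : Set (Set (EuclideanSpace ℝ (Fin N))))
    (E : Set (EuclideanSpace ℝ (Fin N))) (C₀ ε : ℝ) (m : ℕ) :
    Set (EuclideanSpace ℝ (Fin N)) :=
  {x | x ∈ E ∩ Metric.ball 0 2 ∧
      ∃ rx > 0, ∀ r : ℝ, 0 < r → r < rx → aM n N' N ℬ E m x r < C₀ * ε}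

end DDTGen

/-!
Near a point of the relative interior of a face `C(X)`, the other faces stay at positive distance
(they are closed and meet `C(X)` only in proper sub-faces), so there `T` coincides with the
`m`-plane spanned by `X`. Every other point of `T` lies in a facet `C(X \ {v})`, and is a limit of
relative interior points of that facet. Suppose `T` agreed with an `m`-plane `Q` near such a point
`x`. Then `v` is a direction of `Q`, so the points `x - t v` for small `t > 0` lie in `T`; since
`T` is a finite union of closed cones, one face `X'` contains `x` and some `x - δ v`. This forces
`X' = (X \ {v}) ∪ {w}` with `δ v + d w ∈ span (X \ {v})` and `d > 0`, so the components of `v` and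
`w` orthogonal to `span (X \ {v})` point in opposite directions: `∠(X, X')` contains `π`, against
the non-flat condition. The description of `T \ RI_m(T)` is then the `(m-1)`-skeleton of `T`.
-/

namespace DDTGen

open Filter Topology

variable {V : Type*} [NormedAddCommGroup V] [InnerProductSpace ℝ V]

section Cone

variable {X Y : Finset V} {x y v : V}

lemma zero_mem_coneOf (X : Finset V) : (0 : V) ∈ coneOf X :=
  ⟨0, fun _ _ => le_rfl, by simp⟩

lemma add_mem_coneOf (hx : x ∈ coneOf X) (hy : y ∈ coneOf X) : x + y ∈ coneOf X := by
  obtain ⟨c, hc, rfl⟩ := hx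
  obtain ⟨d, hd, rfl⟩ := hy
  exact ⟨c + d, fun u hu => add_nonneg (hc u hu) (hd u hu),
    by simp only [Pi.add_apply, add_smul, Finset.sum_add_distrib]⟩

lemma smul_mem_coneOf {t : ℝ} (ht : 0 ≤ t) (hx : x ∈ coneOf X) : t • x ∈ coneOf X := by
  obtain ⟨c, hc, rfl⟩ := hx
  exact ⟨t • c, fun u hu => mul_nonneg ht (hc u hu),
    by simp only [Pi.smul_apply, smul_eq_mul, Finset.smul_sum, smul_smul]⟩

lemma subset_coneOf (X : Finset V) : (X : Set V) ⊆ coneOf X := fun v hv =>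
  ⟨Pi.single v 1, fun u _ => by by_cases h : u = v <;> simp [h], by
    rw [Finset.sum_eq_single_of_mem v hv fun u _ hu => by simp [hu]]; simp⟩

lemma coneOf_mono (h : Y ⊆ X) : coneOf Y ⊆ coneOf X := by
  rintro x ⟨c, hc, rfl⟩
  refine ⟨fun u => if u ∈ Y then c u else 0, fun u _ => ?_, ?_⟩
  · dsimp only
    split_ifs with hu
    exacts [hc u hu, le_rfl]
  · simp only [ite_smul, zero_smul, Finset.sum_ite_mem, Finset.inter_eq_right.2 h]

lemma coneOf_subset_span (X : Finset V) : coneOf X ⊆ Submodule.span ℝ (X : Set V) := by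
  rintro x ⟨c, -, rfl⟩
  exact Submodule.sum_mem _ fun v hv => Submodule.smul_mem _ _ (Submodule.subset_span hv)

lemma mem_coneOf_insert_iff (hv : v ∉ X) :
    x ∈ coneOf (insert v X) ↔ ∃ a : ℝ, 0 ≤ a ∧ ∃ y ∈ coneOf X, x = a • v + y := by
  constructor
  · rintro ⟨c, hc, rfl⟩
    refine ⟨c v, hc v (Finset.mem_insert_self v X), ∑ u ∈ X, c u • u,
      ⟨c, fun u hu => hc u (Finset.mem_insert_of_mem hu), rfl⟩, Finset.sum_insert hv⟩
  · rintro ⟨a, ha, y, hy, rfl⟩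
    exact add_mem_coneOf
      (smul_mem_coneOf ha (subset_coneOf _ (Finset.mem_insert_self v X)))
      (coneOf_mono (Finset.subset_insert v X) hy)

lemma affineSpan_coneOf (X : Finset V) :
    (affineSpan ℝ (coneOf X) : Set V) = Submodule.span ℝ (X : Set V) := by
  rw [← Set.insert_eq_of_mem (zero_mem_coneOf X), affineSpan_insert_zero]
  exact congrArg _ ((Submodule.span_le.2 (coneOf_subset_span X)).antisymm
    (Submodule.span_mono (subset_coneOf X)))

end Cone

lemma IsSimpleBase.linearIndepOn {m : ℕ} {X : Finset V} (hX : IsSimpleBase m X) :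
    LinearIndepOn ℝ id (X : Set V) := by
  obtain ⟨-, hnorm, haff⟩ := hX
  have hne : ∀ v ∈ (X : Set V), v ≠ 0 := fun v hv h => by simpa [h] using hnorm v hv
  refine (linearIndependent_set_iff_affineIndependent_vadd_union_singleton ℝ hne (0 : V)).2 ?_
  convert haff <;> simp [Set.singleton_union]

lemma IsSimpleBase.mono {m : ℕ} {X A : Finset V} (hX : IsSimpleBase m X) (hAX : A ⊆ X) :
    IsSimpleBase A.card A :=
  ⟨rfl, fun v hv => hX.2.1 v (hAX hv),
    hX.2.2.mono (Set.insert_subset_insert (Finset.coe_subset.2 hAX))⟩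

lemma coneOf_eq_image (X : Finset V) :
    coneOf X = Fintype.linearCombination ℝ (fun u : X => (u : V)) '' {c | ∀ u, 0 ≤ c u} := by
  ext x
  simp only [Fintype.linearCombination_apply, Set.mem_image, Set.mem_ofPred_eq]
  constructor
  · rintro ⟨c, hc, rfl⟩
    exact ⟨fun u => c u, fun u => hc u u.2, Finset.sum_coe_sort X fun u => c u • u⟩
  · rintro ⟨c, hc, rfl⟩
    refine ⟨fun u => if hu : u ∈ X then c ⟨u, hu⟩ else 0, fun u hu => by simp [hu, hc], ?_⟩
    rw [← Finset.sum_coe_sort X]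
    simp

lemma eventually_add_smul_mem_ball (x a : V) {r : ℝ} (hr : 0 < r) :
    ∀ᶠ t in 𝓝 (0 : ℝ), x + t • a ∈ ball x r := by
  have hcont : Continuous (fun t : ℝ => x + t • a) := by fun_prop
  exact hcont.tendsto 0 (by simpa using ball_mem_nhds x hr)

section LinearIndependent

variable {X Z : Finset V} {x v : V} (hX : LinearIndepOn ℝ id (X : Set V))
include hX

lemma isClosedEmbedding_fintypeLinearCombination :
    IsClosedEmbedding (Fintype.linearCombination ℝ (fun u : X => (u : V))) :=
  LinearMap.isClosedEmbedding_of_injective (LinearMap.ker_eq_bot.2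
    (linearIndependent_iff_injective_fintypeLinearCombination.1 hX))

lemma isClosed_coneOf : IsClosed (coneOf X) := by
  rw [coneOf_eq_image]
  refine (isClosedEmbedding_fintypeLinearCombination hX).isClosedMap _ ?_
  simp only [Set.ofPred_forall]
  exact isClosed_iInter fun u => isClosed_le continuous_const (continuous_apply u)

lemma sum_smul_mem_relInterior_coneOf {c : V → ℝ} (hc : ∀ u ∈ X, 0 < c u) :
    ∑ u ∈ X, c u • u ∈ relInterior (coneOf X) := by
  set L := Fintype.linearCombination ℝ (fun u : X => (u : V))
  have hpos : IsOpen {c : X → ℝ | ∀ u, 0 < c u} := by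
    simp only [Set.ofPred_forall]
    exact isOpen_iInter_of_finite fun u => isOpen_lt continuous_const (continuous_apply u)
  obtain ⟨U, hU, hLU⟩ :=
    (isClosedEmbedding_fintypeLinearCombination hX).isInducing.isOpen_iff.1 hpos
  have hLc : L (fun u => c u) = ∑ u ∈ X, c u • u := by
    simp [L, Fintype.linearCombination_apply, Finset.sum_attach X fun u => c u • u]
  have hxU : ∑ u ∈ X, c u • u ∈ U := by
    rw [← hLc, ← Set.mem_preimage, hLU]
    exact fun u => hc u u.2
  refine ⟨⟨c, fun u hu => (hc u hu).le, rfl⟩, ?_⟩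
  obtain ⟨r, hr, hrU⟩ := Metric.isOpen_iff.1 hU _ hxU
  refine ⟨r, hr, fun y ⟨hy, hyr⟩ => ?_⟩
  have hyL : y ∈ LinearMap.range L := by
    simpa [L, Fintype.range_linearCombination, affineSpan_coneOf] using hy
  obtain ⟨d, rfl⟩ := hyL
  have hd : d ∈ L ⁻¹' U := hrU hyr
  rw [hLU] at hd
  rw [coneOf_eq_image]
  exact ⟨d, fun u => (hd u).le, rfl⟩

lemma sub_smul_notMem_coneOf (hv : v ∈ X) (hx : x ∈ Submodule.span ℝ (X.erase v : Set V))
    {t : ℝ} (ht : 0 < t) : x - t • v ∉ coneOf X := by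
  rw [← Finset.insert_erase hv, mem_coneOf_insert_iff (Finset.notMem_erase v X)]
  rintro ⟨a, ha, y, hy, hxy⟩
  have hspan : (t + a) • v ∈ Submodule.span ℝ (X.erase v : Set V) := by
    rw [show (t + a) • v = x - y by linear_combination (norm := module) -hxy]
    exact Submodule.sub_mem _ hx (coneOf_subset_span _ hy)
  rw [Submodule.smul_mem_iff _ (by positivity), Finset.coe_erase] at hspan
  exact hX.notMem_span hv (by simpa using hspan)

lemma notMem_coneOf_of_ssubset (hZ : Z ⊂ X) (hx : x ∈ relInterior (coneOf X)) :
    x ∉ coneOf Z := by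
  intro hxZ
  obtain ⟨v, hvX, hvZ⟩ := Finset.exists_of_ssubset hZ
  obtain ⟨hxX, r, hr, hball⟩ := hx
  obtain ⟨t, hxt, ht⟩ :=
    ((eventually_add_smul_mem_ball x (-v) hr).filter_mono nhdsWithin_le_nhds).and
      (self_mem_nhdsWithin (s := Set.Ioi 0)) |>.exists
  have hspanX : x - t • v ∈ (affineSpan ℝ (coneOf X) : Set V) := by
    rw [affineSpan_coneOf]
    exact Submodule.sub_mem _ (coneOf_subset_span X hxX)
      (Submodule.smul_mem _ _ (Submodule.subset_span hvX))
  have hxZ' : x ∈ Submodule.span ℝ (X.erase v : Set V) :=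
    Submodule.span_mono (Finset.coe_subset.2 fun u hu =>
      Finset.mem_erase.2 ⟨by rintro rfl; exact hvZ hu, hZ.1 hu⟩) (coneOf_subset_span Z hxZ)
  refine sub_smul_notMem_coneOf hX hvX hxZ' ht (hball ⟨hspanX, ?_⟩)
  simpa [sub_eq_add_neg] using hxt

lemma mem_relInterior_or_exists_mem_coneOf_erase (hx : x ∈ coneOf X) :
    x ∈ relInterior (coneOf X) ∨ ∃ v ∈ X, x ∈ coneOf (X.erase v) := by
  obtain ⟨c, hc, rfl⟩ := hx
  by_cases hpos : ∀ u ∈ X, 0 < c u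
  · exact .inl (sum_smul_mem_relInterior_coneOf hX hpos)
  · push Not at hpos
    obtain ⟨v, hv, hcv⟩ := hpos
    refine .inr ⟨v, hv, c, fun u hu => hc u (Finset.mem_of_mem_erase hu), ?_⟩
    rw [← Finset.sum_erase_add _ _ hv, le_antisymm hcv (hc v hv), zero_smul, add_zero]

lemma coneOf_subset_closure_relInterior : coneOf X ⊆ closure (relInterior (coneOf X)) := by
  rintro _ ⟨c, hc, rfl⟩
  have hcont : Continuous fun t : ℝ => ∑ u ∈ X, (c u + t) • u := by fun_prop
  refine mem_closure_of_tendsto (b := 𝓝[>] (0 : ℝ))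
    (by simpa using (hcont.tendsto 0).mono_left nhdsWithin_le_nhds) ?_
  filter_upwards [self_mem_nhdsWithin] with t (ht : 0 < t)
  exact sum_smul_mem_relInterior_coneOf hX fun u hu => add_pos_of_nonneg_of_pos (hc u hu) ht

end LinearIndependent

section Angle

variable {P : Submodule ℝ V} {F₁ F₂ : Finset V} {x z f f₁ f₂ : V}

lemma notMem_of_sub_mem_orthogonal (hz : z ∈ P) (hf : f - z ∈ Pᗮ) (hne : f - z ≠ 0) :
    f ∉ P := fun hfP =>
  hne (Submodule.disjoint_def.1 P.orthogonal_disjoint _ (P.sub_mem hfP hz) hf)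

lemma infDist_eq_dist_of_sub_mem_orthogonal {S : Set V} (hS : S ⊆ P) (hz : z ∈ S)
    (hf : f - z ∈ Pᗮ) : infDist f S = dist f z := by
  refine le_antisymm (infDist_le_dist_of_mem hz) ((le_infDist ⟨z, hz⟩).2 fun y hy => ?_)
  have hpyth := norm_add_sq_eq_norm_sq_add_norm_sq_real
    (P.inner_left_of_mem_orthogonal (P.sub_mem (hS hz) (hS hy)) hf)
  rw [sub_add_sub_cancel] at hpyth
  rw [dist_eq_norm, dist_eq_norm]
  nlinarith [norm_nonneg (f - z), norm_nonneg (f - y), sq_nonneg ‖z - y‖]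

lemma sSup_angleSet_eq_pi (h : Real.pi ∈ angleSet F₁ F₂) : sSup (angleSet F₁ F₂) = Real.pi := by
  have hle : ∀ θ ∈ angleSet F₁ F₂, θ ≤ Real.pi := by
    rintro θ ⟨z, -, f₁, -, f₂, -, -, -, rfl⟩
    exact EuclideanGeometry.angle_le_pi _ _ _
  exact le_antisymm (csSup_le ⟨_, h⟩ hle) (le_csSup ⟨Real.pi, hle⟩ h)

lemma pi_mem_angleSet_of_orthogonal (hP : coneOf (F₁ ∩ F₂) ⊆ P) (hz : z ∈ coneOf (F₁ ∩ F₂))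
    (hf₁ : f₁ ∈ coneOf F₁) (hf₂ : f₂ ∈ coneOf F₂) (horth : f₁ - z ∈ Pᗮ) (hne : f₁ - z ≠ 0)
    {a : ℝ} (ha : a < 0) (hf₂z : f₂ - z = a • (f₁ - z)) : Real.pi ∈ angleSet F₁ F₂ := by
  have horth₂ : f₂ - z ∈ Pᗮ := hf₂z ▸ Pᗮ.smul_mem a horth
  have hne₂ : f₂ - z ≠ 0 := hf₂z ▸ smul_ne_zero ha.ne hne
  refine ⟨z, hz,
    f₁, ⟨hf₁, fun h => notMem_of_sub_mem_orthogonal (hP hz) horth hne (hP h)⟩,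
    f₂, ⟨hf₂, fun h => notMem_of_sub_mem_orthogonal (hP hz) horth₂ hne₂ (hP h)⟩,
    infDist_eq_dist_of_sub_mem_orthogonal hP hz horth,
    infDist_eq_dist_of_sub_mem_orthogonal hP hz horth₂, ?_⟩
  rw [EuclideanGeometry.angle, vsub_eq_sub, vsub_eq_sub, hf₂z]
  exact (InnerProductGeometry.angle_eq_pi_iff.2 ⟨hne, a, ha, rfl⟩).symm

lemma sub_starProjection_eq_smul_of_smul_add_smul_mem [P.HasOrthogonalProjection] {v w : V}
    {δ d : ℝ} (hd : d ≠ 0) (hvw : δ • v + d • w ∈ P) :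
    w - P.starProjection w = (-(δ / d)) • (v - P.starProjection v) := by
  have h := P.starProjection_eq_self_iff.2 hvw
  rw [map_add, map_smul, map_smul] at h
  refine smul_right_injective V hd ?_
  dsimp only
  rw [smul_smul, mul_neg, mul_div_cancel₀ _ hd]
  linear_combination (norm := module) -h

lemma pi_mem_angleSet_of_smul_add_smul_mem_span {v w : V} (hv : v ∈ F₁) (hw : w ∈ F₂)
    (hvY : v ∉ Submodule.span ℝ ((F₁ ∩ F₂ : Finset V) : Set V))
    (hx : x ∈ relInterior (coneOf (F₁ ∩ F₂))) {δ d : ℝ} (hδ : 0 < δ) (hd : 0 < d)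
    (hvw : δ • v + d • w ∈ Submodule.span ℝ ((F₁ ∩ F₂ : Finset V) : Set V)) :
    Real.pi ∈ angleSet F₁ F₂ := by
  set Y := F₁ ∩ F₂
  set P := Submodule.span ℝ (Y : Set V)
  set p := P.starProjection v
  set pw := P.starProjection w
  have hwp : w - pw = (-(δ / d)) • (v - p) :=
    sub_starProjection_eq_smul_of_smul_add_smul_mem hd.ne' hvw
  have hq : v - p ≠ 0 := fun h => hvY (sub_eq_zero.1 h ▸ P.starProjection_apply_mem v)
  obtain ⟨hxY, ρ, hρ, hball⟩ := hx
  rw [affineSpan_coneOf] at hball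
  have hYP : ∀ a ∈ P, ∀ t : ℝ, x + t • a ∈ ball x ρ → x + t • a ∈ coneOf Y := fun a ha t ht =>
    hball ⟨P.add_mem (coneOf_subset_span Y hxY) (P.smul_mem t ha), ht⟩
  obtain ⟨s, ⟨hs₁, hs₂⟩, hs⟩ := (((eventually_add_smul_mem_ball x p hρ).and
    (eventually_add_smul_mem_ball x (p - pw) hρ)).filter_mono nhdsWithin_le_nhds).and
    (self_mem_nhdsWithin (s := Ioi 0)) |>.exists
  have hpP : p ∈ P := P.starProjection_apply_mem v
  have hz := hYP p hpP s hs₁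
  have hy := hYP (p - pw) (P.sub_mem hpP (P.starProjection_apply_mem w)) s hs₂
  have hf₁z : x + s • v - (x + s • p) = s • (v - p) := by module
  refine pi_mem_angleSet_of_orthogonal (P := P) (coneOf_subset_span Y) hz
    (f₁ := x + s • v) (f₂ := s • w + (x + s • (p - pw)))
    (add_mem_coneOf (coneOf_mono Finset.inter_subset_left hxY)
      (smul_mem_coneOf (hs.le) (subset_coneOf _ hv)))
    (add_mem_coneOf (smul_mem_coneOf (hs.le) (subset_coneOf _ hw))
      (coneOf_mono Finset.inter_subset_right hy))
    (hf₁z ▸ Pᗮ.smul_mem s (P.sub_starProjection_mem_orthogonal v))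
    (hf₁z ▸ smul_ne_zero (hs.ne') hq) (neg_neg_of_pos (div_pos hδ hd)) ?_
  rw [hf₁z, show s • w + (x + s • (p - pw)) - (x + s • p) = s • (w - pw) by module, hwp,
    smul_comm]

end Angle

namespace ComplexCone

variable {m : ℕ} (T : ComplexCone V m) {X Y F : Finset V} {x v : V}

lemma inOmega_of_mem_faces (hX : X ∈ T.faces) : T.inOmega X := ⟨X, hX, subset_rfl⟩

lemma linearIndepOn_of_inOmega (hY : T.inOmega Y) : LinearIndepOn ℝ id (Y : Set V) := by
  obtain ⟨X, hX, hYX⟩ := hY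
  exact (T.simple X hX).linearIndepOn.mono (Finset.coe_subset.2 hYX)

lemma notMem_coneOf_of_mem_relInterior (hY : T.inOmega Y) (hF : T.inOmega F) (hFY : ¬F ⊆ Y)
    (hx : x ∈ relInterior (coneOf F)) : x ∉ coneOf Y := by
  intro hxY
  have hxYF : x ∈ coneOf (Y ∩ F) := by
    rw [← T.inter_eq Y F hY hF]
    exact ⟨hxY, hx.1⟩
  refine notMem_coneOf_of_ssubset (T.linearIndepOn_of_inOmega hF)
    (Finset.ssubset_iff_subset_ne.2 ⟨Finset.inter_subset_right, fun h => ?_⟩) hx hxYF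
  exact hFY (Finset.inter_eq_right.1 h)

lemma mem_RI_of_mem_relInterior (hX : X ∈ T.faces) (hx : x ∈ relInterior (coneOf X)) :
    x ∈ RI m T.carrier := by
  have hsep : ∀ᶠ y in 𝓝 x, ∀ F ∈ T.faces, y ∈ coneOf F → F = X := by
    refine (eventually_all_finset _).2 fun F hF => ?_
    by_cases hFX : F = X
    · exact .of_forall fun _ _ => hFX
    have hXF : ¬X ⊆ F := fun h => hFX (Finset.eq_of_subset_of_card_le h
      (by rw [(T.simple X hX).1, (T.simple F hF).1])).symm
    have hxF := T.notMem_coneOf_of_mem_relInterior (T.inOmega_of_mem_faces hF)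
      (T.inOmega_of_mem_faces hX) hXF hx
    filter_upwards [(isClosed_coneOf (T.linearIndepOn_of_inOmega
      (T.inOmega_of_mem_faces hF))).isOpen_compl.mem_nhds hxF] with y hy hyF
    exact absurd hyF hy
  obtain ⟨r₁, hr₁, hsep⟩ := Metric.eventually_nhds_iff_ball.1 hsep
  obtain ⟨hxX, r₀, hr₀, hball⟩ := hx
  refine ⟨mem_biUnion hX hxX, min r₀ r₁, lt_min hr₀ hr₁,
    (Submodule.span ℝ (X : Set V)).toAffineSubspace, ⟨0, Submodule.zero_mem _⟩, ?_, ?_⟩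
  · rw [Submodule.toAffineSubspace_direction,
      finrank_span_finset_eq_card (T.simple X hX).linearIndepOn, (T.simple X hX).1]
  ext y
  constructor
  · rintro ⟨hyT, hyr⟩
    obtain ⟨F, hF, hyF⟩ := mem_iUnion₂.1 hyT
    obtain rfl := hsep y (ball_subset_ball (min_le_right _ _) hyr) F hF hyF
    exact ⟨coneOf_subset_span F hyF, hyr⟩
  · rintro ⟨hyQ, hyr⟩
    refine ⟨mem_biUnion hX (hball ⟨?_, ball_subset_ball (min_le_left _ _) hyr⟩), hyr⟩
    rwa [affineSpan_coneOf]

lemma eventually_sub_smul_mem_carrier (hX : X ∈ T.faces) (hv : v ∈ X) (hx : x ∈ coneOf X)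
    {Q : AffineSubspace ℝ V} {r : ℝ} (hr : 0 < r)
    (hloc : T.carrier ∩ ball x r = (Q : Set V) ∩ ball x r) :
    ∀ᶠ t in 𝓝 (0 : ℝ), x - t • v ∈ T.carrier := by
  have hQ : ∀ y ∈ coneOf X, y ∈ ball x r → y ∈ Q := fun y hy hyr =>
    (hloc.subset ⟨mem_biUnion hX hy, hyr⟩).1
  have hxQ := hQ x hx (mem_ball_self hr)
  obtain ⟨t, htr, ht⟩ := ((eventually_add_smul_mem_ball x v hr).filter_mono
    nhdsWithin_le_nhds).and (self_mem_nhdsWithin (s := Ioi 0)) |>.exists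
  have hvQ : v ∈ Q.direction := by
    have := AffineSubspace.vsub_mem_direction
      (hQ _ (add_mem_coneOf hx (smul_mem_coneOf (ht.le) (subset_coneOf X hv))) htr) hxQ
    rwa [vsub_eq_sub, add_sub_cancel_left, Submodule.smul_mem_iff _ (ht.ne')] at this
  filter_upwards [eventually_add_smul_mem_ball x (-v) hr] with t ht
  have hmemQ := AffineSubspace.vadd_mem_of_mem_direction (Q.direction.smul_mem (-t) hvQ) hxQ
  rw [vadd_eq_add, neg_smul, ← sub_eq_neg_add] at hmemQ
  exact (hloc.symm.subset ⟨hmemQ, by simpa [sub_eq_add_neg] using ht⟩).1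

lemma exists_face_sub_smul_mem (h : ∀ᶠ t in 𝓝 (0 : ℝ), x - t • v ∈ T.carrier) :
    ∃ X' ∈ T.faces, x ∈ coneOf X' ∧ ∃ δ : ℝ, 0 < δ ∧ x - δ • v ∈ coneOf X' := by
  obtain ⟨X', hX', hfreq⟩ : ∃ X' ∈ T.faces, ∃ᶠ t in 𝓝[>] (0 : ℝ), x - t • v ∈ coneOf X' := by
    rw [← frequently_exists_finset]
    simpa [carrier] using (h.filter_mono nhdsWithin_le_nhds).frequently
  have hlim : Tendsto (fun t : ℝ => x - t • v) (𝓝[>] 0) (𝓝 x) := by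
    have hcont : Continuous fun t : ℝ => x - t • v := by fun_prop
    simpa using (hcont.tendsto 0).mono_left nhdsWithin_le_nhds
  refine ⟨X', hX', (isClosed_coneOf (T.linearIndepOn_of_inOmega
    (T.inOmega_of_mem_faces hX'))).mem_of_frequently_of_tendsto hfreq hlim, ?_⟩
  obtain ⟨δ, hδ, hδ0⟩ := (hfreq.and_eventually self_mem_nhdsWithin).exists
  exact ⟨δ, hδ0, hδ⟩

variable {T} in
lemma NonFlat.carrier_inter_ball_ne (hT : T.NonFlat) (hX : X ∈ T.faces) (hv : v ∈ X)
    (hx : x ∈ relInterior (coneOf (X.erase v))) (Q : AffineSubspace ℝ V) {r : ℝ} (hr : 0 < r) :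
    T.carrier ∩ ball x r ≠ (Q : Set V) ∩ ball x r := by
  intro hloc
  set Y := X.erase v
  have hYT : T.inOmega Y := ⟨X, hX, Finset.erase_subset v X⟩
  have hYm : Y.card + 1 = m := by rw [Finset.card_erase_add_one hv, (T.simple X hX).1]
  have hXli := (T.simple X hX).linearIndepOn
  have hxspan : x ∈ Submodule.span ℝ (Y : Set V) := coneOf_subset_span Y hx.1
  obtain ⟨X', hX', hxX', δ, hδ, hδX'⟩ := T.exists_face_sub_smul_mem
    (T.eventually_sub_smul_mem_carrier hX hv (coneOf_mono (Finset.erase_subset v X) hx.1) hr hloc)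
  have hYX' : Y ⊆ X' := by
    by_contra h
    exact T.notMem_coneOf_of_mem_relInterior (T.inOmega_of_mem_faces hX') hYT h hx hxX'
  obtain ⟨w, hwY, rfl⟩ := Finset.exists_eq_insert_iff.2 ⟨hYX', by rw [hYm, (T.simple _ hX').1]⟩
  obtain ⟨d, hd, y, hy, hxy⟩ := (mem_coneOf_insert_iff hwY).1 hδX'
  -- `x - δ • v` has a negative `v`-coordinate, so it lies neither in `C(X)` nor in `C(Y)`.
  have hwv : w ≠ v := by
    rintro rfl
    exact sub_smul_notMem_coneOf hXli hv hxspan hδ (Finset.insert_erase hv ▸ hδX')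
  have hd : 0 < d := by
    refine lt_of_le_of_ne hd fun hd0 => sub_smul_notMem_coneOf hXli hv hxspan hδ ?_
    rw [hxy, ← hd0, zero_smul, zero_add]
    exact coneOf_mono (Finset.erase_subset v X) hy
  have hinter : X ∩ insert w Y = Y := by
    rw [Finset.inter_insert_of_notMem fun hwX => hwY (Finset.mem_erase.2 ⟨hwv, hwX⟩),
      Finset.inter_eq_right.2 (Finset.erase_subset v X)]
  have hvw : δ • v + d • w ∈ Submodule.span ℝ (Y : Set V) := by
    rw [show δ • v + d • w = x - y by linear_combination (norm := module) -hxy]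
    exact Submodule.sub_mem _ hxspan (coneOf_subset_span Y hy)
  have hvY : v ∉ Submodule.span ℝ (Y : Set V) := by
    simpa [Y] using hXli.notMem_span hv
  have hpi := pi_mem_angleSet_of_smul_add_smul_mem_span hv (Finset.mem_insert_self w Y)
    (by rwa [hinter]) (by rwa [hinter]) hδ hd (by rwa [hinter])
  have hlt := hT Y X (insert w Y) hYT (T.inOmega_of_mem_faces hX) (T.inOmega_of_mem_faces hX')
    (by omega) hinter.symm (by rw [(T.simple X hX).1, hYm]) (by rw [(T.simple _ hX').1, hYm])
  rw [sSup_angleSet_eq_pi hpi] at hlt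
  exact lt_irrefl _ hlt

variable {T} in
lemma NonFlat.RI_subset_iUnion_relInterior (hT : T.NonFlat) :
    RI m T.carrier ⊆ ⋃ X ∈ T.faces, relInterior (coneOf X) := by
  rintro x ⟨hxT, r, hr, Q, -, -, hloc⟩
  obtain ⟨X, hX, hxX⟩ := mem_iUnion₂.1 hxT
  obtain h | ⟨v, hv, hxv⟩ :=
    mem_relInterior_or_exists_mem_coneOf_erase (T.simple X hX).linearIndepOn hxX
  · exact mem_biUnion hX h
  obtain ⟨x', hx', hxx'⟩ := Metric.mem_closure_iff.1 (coneOf_subset_closure_relInterior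
    (T.linearIndepOn_of_inOmega ⟨X, hX, Finset.erase_subset v X⟩) hxv) (r / 2) (half_pos hr)
  have hsub : ball x' (r / 2) ⊆ ball x r := ball_subset_ball' (by rw [dist_comm]; linarith)
  refine absurd ?_ (hT.carrier_inter_ball_ne hX hv hx' Q (half_pos hr))
  rw [← inter_eq_right.2 hsub, ← inter_assoc, hloc, inter_assoc]

lemma carrier_diff_iUnion_relInterior (hm : 1 ≤ m) :
    T.carrier \ ⋃ X ∈ T.faces, relInterior (coneOf X) =
      ⋃ Y ∈ {Y : Finset V | T.inOmega Y ∧ Y.card = m - 1}, coneOf Y := by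
  ext x
  constructor
  · rintro ⟨hxT, hxRI⟩
    obtain ⟨X, hX, hxX⟩ := mem_iUnion₂.1 hxT
    obtain h | ⟨v, hv, hxv⟩ :=
      mem_relInterior_or_exists_mem_coneOf_erase (T.simple X hX).linearIndepOn hxX
    · exact absurd (mem_biUnion hX h) hxRI
    refine mem_biUnion (x := X.erase v) ⟨⟨X, hX, Finset.erase_subset v X⟩, ?_⟩ hxv
    rw [Finset.card_erase_of_mem hv, (T.simple X hX).1]
  · intro hx
    obtain ⟨Y, ⟨⟨X, hX, hYX⟩, hYcard⟩, hxY⟩ := mem_iUnion₂.1 hx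
    refine ⟨mem_biUnion hX (coneOf_mono hYX hxY), fun hxRI => ?_⟩
    obtain ⟨F, hF, hxF⟩ := mem_iUnion₂.1 hxRI
    refine T.notMem_coneOf_of_mem_relInterior ⟨X, hX, hYX⟩ (T.inOmega_of_mem_faces hF)
      (fun hFY => ?_) hxF hxY
    have := Finset.card_le_card hFY
    rw [(T.simple F hF).1] at this
    omega

lemma inOmega_of_mem_biUnion_powersetCard {k : ℕ}
    (hY : ∃ A ∈ T.faces.biUnion (Finset.powersetCard k), Y ⊆ A) : T.inOmega Y := by
  obtain ⟨A, hA, hYA⟩ := hY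
  obtain ⟨X, hX, hAX⟩ := Finset.mem_biUnion.1 hA
  exact ⟨X, hX, hYA.trans (Finset.mem_powersetCard.1 hAX).1⟩

def skeleton (k : ℕ) (hk : k ≤ m) : ComplexCone V k where
  faces := T.faces.biUnion (Finset.powersetCard k)
  faces_nonempty := by
    obtain ⟨X, hX⟩ := T.faces_nonempty
    obtain ⟨A, hA⟩ := Finset.powersetCard_nonempty.2 ((T.simple X hX).1 ▸ hk)
    exact ⟨A, Finset.mem_biUnion.2 ⟨X, hX, hA⟩⟩
  simple A hA := by
    obtain ⟨X, hX, hA⟩ := Finset.mem_biUnion.1 hA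
    obtain ⟨hAX, rfl⟩ := Finset.mem_powersetCard.1 hA
    exact (T.simple X hX).mono hAX
  inter_eq A B hA hB :=
    T.inter_eq A B (T.inOmega_of_mem_biUnion_powersetCard hA)
      (T.inOmega_of_mem_biUnion_powersetCard hB)

variable {T} in
lemma NonFlat.skeleton (hT : T.NonFlat) (k : ℕ) (hk : k ≤ m) : (T.skeleton k hk).NonFlat :=
  fun Y Z₁ Z₂ hY hZ₁ hZ₂ hcard => hT Y Z₁ Z₂ (T.inOmega_of_mem_biUnion_powersetCard hY)
    (T.inOmega_of_mem_biUnion_powersetCard hZ₁) (T.inOmega_of_mem_biUnion_powersetCard hZ₂)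
    (hcard.trans_le hk)

lemma carrier_skeleton (k : ℕ) (hk : k ≤ m) :
    (T.skeleton k hk).carrier = ⋃ Y ∈ {Y : Finset V | T.inOmega Y ∧ Y.card = k}, coneOf Y := by
  ext x
  simp only [carrier, skeleton, inOmega, Finset.mem_biUnion, Finset.mem_powersetCard,
    mem_iUnion, mem_ofPred_eq, exists_prop]
  constructor
  · rintro ⟨A, ⟨X, hX, hAX, hAk⟩, hx⟩
    exact ⟨A, ⟨⟨X, hX, hAX⟩, hAk⟩, hx⟩
  · rintro ⟨A, ⟨⟨X, hX, hAX⟩, hAk⟩, hx⟩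
    exact ⟨A, ⟨X, hX, hAX, hAk⟩, hx⟩

end ComplexCone

theorem statement1_general
    (N' : ℕ) (m : ℕ) (hm1 : 1 ≤ m)
    (T : ComplexCone (EuclideanSpace ℝ (Fin N')) m) (hT : T.NonFlat) :
    RI m T.carrier = (⋃ X ∈ T.faces, relInterior (coneOf X)) ∧
    T.carrier \ RI m T.carrier =
      (⋃ Y ∈ {Y : Finset (EuclideanSpace ℝ (Fin N')) | T.inOmega Y ∧ Y.card = m - 1},
        coneOf Y) ∧
    ∃ T' : ComplexCone (EuclideanSpace ℝ (Fin N')) (m - 1), T'.NonFlat ∧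
      T'.carrier = T.carrier \ RI m T.carrier := by
  have hRI : RI m T.carrier = ⋃ X ∈ T.faces, relInterior (coneOf X) :=
    hT.RI_subset_iUnion_relInterior.antisymm
      (iUnion₂_subset fun X hX _ hx => T.mem_RI_of_mem_relInterior hX hx)
  have hdiff : T.carrier \ RI m T.carrier =
      ⋃ Y ∈ {Y | T.inOmega Y ∧ Y.card = m - 1}, coneOf Y := by
    rw [hRI, T.carrier_diff_iUnion_relInterior hm1]
  exact ⟨hRI, hdiff, T.skeleton (m - 1) (Nat.sub_le m 1), hT.skeleton _ _,
    by rw [T.carrier_skeleton, hdiff]⟩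

/-- **Lemma 2.8**: for a non-flat complex cone `T` of dimension `m ∈ {1,…,n}`,
the relative interior `RI_m(T)` is the union of the relative interiors of the
faces, and `T \ RI_m(T)` is a non-flat complex cone of dimension `m−1`, equal
to the union of the cones over the `(m−1)`-element members of `Ω_T`. -/
theorem statement1
    (n N' : ℕ) (hn : 0 < n) (hnN' : n < N')
    (m : ℕ) (hm1 : 1 ≤ m) (hmn : m ≤ n)
    (T : ComplexCone (EuclideanSpace ℝ (Fin N')) m) (hT : T.NonFlat) :
    RI m T.carrier = (⋃ X ∈ T.faces, relInterior (coneOf X)) ∧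
    T.carrier \ RI m T.carrier =
      (⋃ Y ∈ {Y : Finset (EuclideanSpace ℝ (Fin N')) | T.inOmega Y ∧ Y.card = m - 1},
        coneOf Y) ∧
    ∃ T' : ComplexCone (EuclideanSpace ℝ (Fin N')) (m - 1), T'.NonFlat ∧
      T'.carrier = T.carrier \ RI m T.carrier :=
  statement1_general N' m hm1 T hT

end DDTGen
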